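/- arXiv:1705.05664 — 6 statements merged into one kernel-verified Lean document; each statement's English description precedes it below -/
import Mathlib

section
/- Suppose (x,y,φ,ψ) ∈ ℝ²×[0,2π)² satisfies e^{2x} = 1 + 2e^y cos ψ + e^{2y} and e^{2y} = 1 + 2e^x cos φ + e^{2x}. Then either both (x,y,φ,ψ) and (x,y,2π−φ,2π−ψ) satisfy e^{x+iφ}+e^{y+iψ}+1=0, or both (x,y,2π−φ,ψ) and (x,y,φ,2π−ψ) do. -/
open Real Complex

lemma expc_aux (x φ : ℝ) : Complex.exp (x + φ * Complex.I) =
    (Real.exp x * Real.cos φ : ℝ) + (Real.exp x * Real.sin φ : ℝ) * Complex.I := by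
  rw [Complex.exp_add, Complex.exp_mul_I, ← Complex.ofReal_exp, ← Complex.ofReal_cos,
    ← Complex.ofReal_sin]
  push_cast
  ring

lemma expsum_aux (x y φ ψ : ℝ)
    (hre : Real.exp x * Real.cos φ + Real.exp y * Real.cos ψ + 1 = 0)
    (him : Real.exp x * Real.sin φ + Real.exp y * Real.sin ψ = 0) :
    Complex.exp (x + φ * Complex.I) + Complex.exp (y + ψ * Complex.I) + 1 = 0 := by
  rw [expc_aux, expc_aux]
  have h : ((Real.exp x * Real.cos φ : ℝ) : ℂ) + (Real.exp x * Real.sin φ : ℝ) * Complex.I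
      + ((Real.exp y * Real.cos ψ : ℝ) + (Real.exp y * Real.sin ψ : ℝ) * Complex.I) + 1
      = ((Real.exp x * Real.cos φ + Real.exp y * Real.cos ψ + 1 : ℝ) : ℂ)
      + ((Real.exp x * Real.sin φ + Real.exp y * Real.sin ψ : ℝ) : ℂ) * Complex.I := by
    push_cast; ring
  rw [h, hre, him]
  simp

theorem stmt_2 (x y φ ψ : ℝ)
    (hφ : φ ∈ Set.Ico 0 (2 * π)) (hψ : ψ ∈ Set.Ico 0 (2 * π))
    (h1 : Real.exp (2 * x) = 1 + 2 * Real.exp y * Real.cos ψ + Real.exp (2 * y))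
    (h2 : Real.exp (2 * y) = 1 + 2 * Real.exp x * Real.cos φ + Real.exp (2 * x)) :
    (Complex.exp (x + φ * Complex.I) + Complex.exp (y + ψ * Complex.I) + 1 = 0 ∧
      Complex.exp (x + (2 * π - φ) * Complex.I) +
        Complex.exp (y + (2 * π - ψ) * Complex.I) + 1 = 0) ∨
    (Complex.exp (x + (2 * π - φ) * Complex.I) + Complex.exp (y + ψ * Complex.I) + 1 = 0 ∧
      Complex.exp (x + φ * Complex.I) +
        Complex.exp (y + (2 * π - ψ) * Complex.I) + 1 = 0) := by
  have e2x : Real.exp (2 * x) = Real.exp x * Real.exp x := by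
    rw [← Real.exp_add]; ring_nf
  have e2y : Real.exp (2 * y) = Real.exp y * Real.exp y := by
    rw [← Real.exp_add]; ring_nf
  have pφ := Real.sin_sq_add_cos_sq φ
  have pψ := Real.sin_sq_add_cos_sq ψ
  have hsum : Real.exp x * Real.cos φ + Real.exp y * Real.cos ψ + 1 = 0 := by linarith
  have hsq : (Real.exp x * Real.sin φ) * (Real.exp x * Real.sin φ)
      = (Real.exp y * Real.sin ψ) * (Real.exp y * Real.sin ψ) := by nlinarith
  have hcφ : Real.cos (2 * π - φ) = Real.cos φ := by
    simp [Real.cos_sub]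
  have hsφ : Real.sin (2 * π - φ) = - Real.sin φ := by
    simp [Real.sin_sub]
  have hcψ : Real.cos (2 * π - ψ) = Real.cos ψ := by
    simp [Real.cos_sub]
  have hsψ : Real.sin (2 * π - ψ) = - Real.sin ψ := by
    simp [Real.sin_sub]
  rcases mul_self_eq_mul_self_iff.mp hsq with h | h
  · right
    constructor
    · have : ((2 : ℂ) * π - φ) = ((2 * π - φ : ℝ) : ℂ) := by push_cast; ring
      rw [this]
      exact expsum_aux x y _ _ (by rw [hcφ]; linarith) (by rw [hsφ]; linarith)
    · have : ((2 : ℂ) * π - ψ) = ((2 * π - ψ : ℝ) : ℂ) := by push_cast; ring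
      rw [this]
      exact expsum_aux x y _ _ (by rw [hcψ]; linarith) (by rw [hsψ]; linarith)
  · left
    constructor
    · exact expsum_aux x y _ _ hsum (by linarith)
    · have hA : ((2 : ℂ) * π - φ) = ((2 * π - φ : ℝ) : ℂ) := by push_cast; ring
      have hB : ((2 : ℂ) * π - ψ) = ((2 * π - ψ : ℝ) : ℂ) := by push_cast; ring
      rw [hA, hB]
      exact expsum_aux x y _ _ (by rw [hcφ, hcψ]; linarith) (by rw [hsφ, hsψ]; linarith)
end

section
/- If (x,y) lies in the interior of the amoeba of H (i.e. e^x−e^y<1, e^y−e^x<1, e^x+e^y>1), then the fiber of H over (x,y) under the projection (x,y,φ,ψ)↦(x,y) consists of exactly two points, of the form (x,y,φ,ψ) and (x,y,2π−φ,2π−ψ) with (φ,ψ) ∉ {(0,0),(0,π),(π,0),(π,π)}. -/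
open Real Complex

lemma key_exp (t a : ℝ) : Complex.exp (t + a * Complex.I) =
    (↑(Real.exp t * Real.cos a) : ℂ) + ↑(Real.exp t * Real.sin a) * Complex.I := by
  rw [Complex.exp_add, Complex.exp_mul_I]
  push_cast
  ring

lemma eqn_iff (x y a b : ℝ) :
    Complex.exp (x + a * Complex.I) + Complex.exp (y + b * Complex.I) + 1 = 0 ↔
    (Real.exp x * Real.cos a + Real.exp y * Real.cos b + 1 = 0 ∧
     Real.exp x * Real.sin a + Real.exp y * Real.sin b = 0) := by
  rw [key_exp, key_exp, Complex.ext_iff]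
  simp [Complex.add_re, Complex.add_im, Complex.exp_ofReal_re, Complex.cos_ofReal_re, Complex.sin_ofReal_re]

lemma amoeba_id (r s : ℝ) (hr : r ≠ 0) (hs : s ≠ 0) :
    r^2 * (1 - ((s^2 - r^2 - 1)/(2*r))^2) = s^2 * (1 - ((r^2 - s^2 - 1)/(2*s))^2) := by
  field_simp
  ring

lemma amoeba_re (r s : ℝ) (hr : r ≠ 0) (hs : s ≠ 0) :
    r * ((s^2 - r^2 - 1)/(2*r)) + s * ((r^2 - s^2 - 1)/(2*s)) + 1 = 0 := by
  field_simp
  ring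

lemma cos_cases (a θ : ℝ) (ha : a ∈ Set.Ico 0 (2*π)) (hθ : θ ∈ Set.Icc 0 π)
    (h : Real.cos a = Real.cos θ) : a = θ ∨ a = 2*π - θ := by
  rcases le_or_gt a π with hle | hgt
  · left; exact Real.injOn_cos ⟨ha.1, hle⟩ hθ h
  · right
    have h2 : 2*π - a ∈ Set.Icc 0 π := ⟨by linarith [ha.2], by linarith⟩
    have hc : Real.cos (2*π - a) = Real.cos θ := by
      rw [Real.cos_sub]; simp [h]
    have := Real.injOn_cos h2 hθ hc
    linarith

set_option maxHeartbeats 800000 in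
theorem stmt_4 (x y : ℝ)
    (h1 : Real.exp x - Real.exp y < 1) (h2 : Real.exp y - Real.exp x < 1)
    (h3 : 1 < Real.exp x + Real.exp y) :
    ∃ φ ψ : ℝ, φ ∈ Set.Ico 0 (2 * π) ∧ ψ ∈ Set.Ico 0 (2 * π) ∧
      (φ, ψ) ∉ ({(0, 0), (0, π), (π, 0), (π, π)} : Set (ℝ × ℝ)) ∧
      (φ, ψ) ≠ (2 * π - φ, 2 * π - ψ) ∧
      {p : ℝ × ℝ | p.1 ∈ Set.Ico 0 (2 * π) ∧ p.2 ∈ Set.Ico 0 (2 * π) ∧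
          Complex.exp (x + p.1 * Complex.I) + Complex.exp (y + p.2 * Complex.I) + 1 = 0}
        = {(φ, ψ), (2 * π - φ, 2 * π - ψ)} := by
  have hpi := Real.pi_pos
  obtain ⟨r, hr_def⟩ : ∃ t : ℝ, t = Real.exp x := ⟨_, rfl⟩
  obtain ⟨s, hs_def⟩ : ∃ t : ℝ, t = Real.exp y := ⟨_, rfl⟩
  rw [← hr_def, ← hs_def] at h1 h2 h3
  have hr : 0 < r := hr_def ▸ Real.exp_pos x
  have hs : 0 < s := hs_def ▸ Real.exp_pos y
  obtain ⟨cphi, hcphi_def⟩ : ∃ t : ℝ, t = (s^2 - r^2 - 1)/(2*r) := ⟨_, rfl⟩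
  obtain ⟨cpsi, hcpsi_def⟩ : ∃ t : ℝ, t = (r^2 - s^2 - 1)/(2*s) := ⟨_, rfl⟩
  have hcphi1 : -1 < cphi := by
    rw [hcphi_def, lt_div_iff₀ (by linarith : (0:ℝ) < 2*r)]
    have := mul_pos (show (0:ℝ) < s - r + 1 by linarith) (show (0:ℝ) < s + r - 1 by linarith)
    linarith [this]
  have hcphi2 : cphi < 1 := by
    rw [hcphi_def, div_lt_one (by linarith : (0:ℝ) < 2*r)]
    have := mul_pos (show (0:ℝ) < r + 1 - s by linarith) (show (0:ℝ) < r + 1 + s by linarith)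
    linarith [this]
  have hcpsi1 : -1 < cpsi := by
    rw [hcpsi_def, lt_div_iff₀ (by linarith : (0:ℝ) < 2*s)]
    have := mul_pos (show (0:ℝ) < r - s + 1 by linarith) (show (0:ℝ) < r + s - 1 by linarith)
    linarith [this]
  have hcpsi2 : cpsi < 1 := by
    rw [hcpsi_def, div_lt_one (by linarith : (0:ℝ) < 2*s)]
    have := mul_pos (show (0:ℝ) < s + 1 - r by linarith) (show (0:ℝ) < s + 1 + r by linarith)
    linarith [this]
  obtain ⟨φ, hφ_def⟩ : ∃ t : ℝ, t = Real.arccos cphi := ⟨_, rfl⟩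
  obtain ⟨α, hα_def⟩ : ∃ t : ℝ, t = Real.arccos cpsi := ⟨_, rfl⟩
  obtain ⟨ψ, hψ_def⟩ : ∃ t : ℝ, t = 2*π - α := ⟨_, rfl⟩
  have hφ0 : 0 < φ := hφ_def ▸ Real.arccos_pos.mpr hcphi2
  have hφπ : φ < π := hφ_def ▸ lt_of_le_of_ne (Real.arccos_le_pi cphi)
    (fun h => absurd (Real.arccos_eq_pi.mp h) (by linarith))
  have hα0 : 0 < α := hα_def ▸ Real.arccos_pos.mpr hcpsi2
  have hαπ : α < π := hα_def ▸ lt_of_le_of_ne (Real.arccos_le_pi cpsi)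
    (fun h => absurd (Real.arccos_eq_pi.mp h) (by linarith))
  have hcosφ : Real.cos φ = cphi := hφ_def ▸ Real.cos_arccos hcphi1.le hcphi2.le
  have hcosα : Real.cos α = cpsi := hα_def ▸ Real.cos_arccos hcpsi1.le hcpsi2.le
  have hsinφ : 0 < Real.sin φ := Real.sin_pos_of_pos_of_lt_pi hφ0 hφπ
  have hsinα : 0 < Real.sin α := Real.sin_pos_of_pos_of_lt_pi hα0 hαπ
  have hcosψ : Real.cos ψ = cpsi := by
    rw [hψ_def, Real.cos_sub]; simp [hcosα]
  have hsinψ : Real.sin ψ = - Real.sin α := by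
    rw [hψ_def, Real.sin_sub]; simp
  -- key identity
  have hkey : r * Real.sin φ = s * Real.sin α := by
    have hsφ : Real.sin φ = Real.sqrt (1 - cphi^2) := by
      rw [hφ_def, Real.sin_arccos]
    have hsα : Real.sin α = Real.sqrt (1 - cpsi^2) := by
      rw [hα_def, Real.sin_arccos]
    have h1' : (0:ℝ) ≤ 1 - cphi^2 := by
      have := mul_pos (show (0:ℝ) < 1 - cphi by linarith) (show (0:ℝ) < 1 + cphi by linarith)
      linarith [this]
    have h2' : (0:ℝ) ≤ 1 - cpsi^2 := by
      have := mul_pos (show (0:ℝ) < 1 - cpsi by linarith) (show (0:ℝ) < 1 + cpsi by linarith)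
      linarith [this]
    have hsq : (r * Real.sin φ)^2 = (s * Real.sin α)^2 := by
      rw [hsφ, hsα, mul_pow, mul_pow, Real.sq_sqrt h1', Real.sq_sqrt h2', hcphi_def, hcpsi_def]
      exact amoeba_id r s hr.ne' hs.ne'
    have hl : 0 ≤ r * Real.sin φ := mul_nonneg hr.le hsinφ.le
    have hr' : 0 ≤ s * Real.sin α := mul_nonneg hs.le hsinα.le
    rw [← Real.sqrt_sq hl, ← Real.sqrt_sq hr', hsq]
  have hre : r * Real.cos φ + s * Real.cos ψ + 1 = 0 := by
    rw [hcosφ, hcosψ, hcphi_def, hcpsi_def]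
    exact amoeba_re r s hr.ne' hs.ne'
  have him : r * Real.sin φ + s * Real.sin ψ = 0 := by
    rw [hsinψ]; linarith
  refine ⟨φ, ψ, ⟨hφ0.le, by linarith⟩, ⟨by linarith, by linarith⟩, ?_, ?_, ?_⟩
  · simp only [Set.mem_insert_iff, Set.mem_singleton_iff, Prod.mk.injEq, not_or]
    exact ⟨fun h => absurd h.1 (by linarith), fun h => absurd h.1 (by linarith),
      fun h => absurd h.1 (by linarith), fun h => absurd h.1 (by linarith)⟩
  · intro h
    have := (Prod.mk.injEq _ _ _ _).mp h
    have h1' := this.1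
    linarith
  · ext ⟨a, b⟩
    simp only [Set.mem_setOf_eq, Set.mem_insert_iff, Set.mem_singleton_iff, Prod.mk.injEq,
      Set.mem_Ico]
    constructor
    · rintro ⟨⟨ha0, ha2⟩, ⟨hb0, hb2⟩, heq⟩
      rw [eqn_iff] at heq
      obtain ⟨he1, he2⟩ := heq
      rw [← hr_def, ← hs_def] at he1 he2
      have pa := Real.sin_sq_add_cos_sq a
      have pb := Real.sin_sq_add_cos_sq b
      have e1 : s * Real.cos b = -(1 + r * Real.cos a) := by linarith
      have e2 : s * Real.sin b = -(r * Real.sin a) := by linarith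
      have e3 : r * Real.cos a = -(1 + s * Real.cos b) := by linarith
      have e4 : r * Real.sin a = -(s * Real.sin b) := by linarith
      have pa' : r^2 * (Real.sin a^2 + Real.cos a^2) = r^2 * 1 := by rw [pa]
      have pb' : s^2 * (Real.sin b^2 + Real.cos b^2) = s^2 * 1 := by rw [pb]
      have hB2 : (s*Real.cos b)^2 + (s*Real.sin b)^2 = s^2 := by linear_combination pb'
      have hA2 : (r*Real.cos a)^2 + (r*Real.sin a)^2 = r^2 := by linear_combination pa'
      rw [e1, e2] at hB2
      rw [e3, e4] at hA2
      have hca : Real.cos a = cphi := by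
        rw [hcphi_def, eq_div_iff (by linarith : (2:ℝ)*r ≠ 0)]
        linear_combination hB2 - pa'
      have hcb : Real.cos b = cpsi := by
        rw [hcpsi_def, eq_div_iff (by linarith : (2:ℝ)*s ≠ 0)]
        linear_combination hA2 - pb'
      have hacase := cos_cases a φ ⟨ha0, ha2⟩ ⟨hφ0.le, hφπ.le⟩ (by rw [hca, hcosφ])
      have hbcase := cos_cases b α ⟨hb0, hb2⟩ ⟨hα0.le, hαπ.le⟩ (by rw [hcb, hcosα])
      have h2πα : (2*π - α : ℝ) = ψ := by rw [hψ_def]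
      rcases hacase with rfl | rfl
      · rcases hbcase with rfl | rfl
        · exfalso
          linarith [mul_pos hr hsinφ, mul_pos hs hsinα]
        · left; exact ⟨rfl, by rw [hψ_def]⟩
      · rcases hbcase with rfl | rfl
        · right
          constructor
          · rfl
          · rw [hψ_def]; ring
        · exfalso
          have hsa : Real.sin (2*π - φ) = - Real.sin φ := by
            rw [Real.sin_sub]; simp
          have hsb : Real.sin (2*π - α) = - Real.sin α := by
            rw [Real.sin_sub]; simp
          rw [hsa, hsb] at he2
          have t1 := mul_pos hr hsinφ
          have t2 := mul_pos hs hsinα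
          linarith [t1, t2, he2]
    · rintro (⟨rfl, rfl⟩ | ⟨rfl, rfl⟩)
      · refine ⟨⟨hφ0.le, by linarith⟩, ⟨by linarith, by linarith⟩, ?_⟩
        rw [eqn_iff, ← hr_def, ← hs_def]
        exact ⟨hre, him⟩
      · refine ⟨⟨by linarith, by linarith⟩, ⟨by linarith, by linarith⟩, ?_⟩
        rw [eqn_iff, ← hr_def, ← hs_def]
        have hca' : Real.cos (2*π - φ) = Real.cos φ := by
          rw [Real.cos_sub]; simp
        have hsa' : Real.sin (2*π - φ) = - Real.sin φ := by
          rw [Real.sin_sub]; simp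
        have hcb' : Real.cos (2*π - ψ) = Real.cos ψ := by
          rw [Real.cos_sub]; simp
        have hsb' : Real.sin (2*π - ψ) = - Real.sin ψ := by
          rw [Real.sin_sub]; simp
        rw [hca', hsa', hcb', hsb']
        exact ⟨hre, by linarith⟩
end

section
/- Let (x,y,φ,ψ) ∈ H with angles in [0,2π). Then (φ,ψ) ∉ {(0,0),(0,π),(π,0),(π,π)} if and only if e^x = −sin ψ / sin(ψ−φ) and e^y = sin φ / sin(ψ−φ) (in particular sin(ψ−φ) ≠ 0 in that case). -/
open Real Complex

lemma aux_sin_zero (θ : ℝ) (h0 : 0 ≤ θ) (h2 : θ < 2 * π) (hs : Real.sin θ = 0) :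
    θ = 0 ∨ θ = π := by
  rw [Real.sin_eq_zero_iff] at hs
  obtain ⟨n, hn⟩ := hs
  have hπ := Real.pi_pos
  have hn0 : (0:ℤ) ≤ n := by
    by_contra hc
    push_neg at hc
    have h1 := Int.lt_iff_add_one_le.mp hc
    have h1' : ((n:ℝ) + 1) ≤ 0 := by exact_mod_cast h1
    nlinarith
  have hn2 : n < 2 := by
    by_contra hc
    push_neg at hc
    have : (2:ℝ) ≤ (n:ℝ) := by exact_mod_cast hc
    nlinarith
  interval_cases n <;> simp at hn <;> [left; right] <;> linarith

theorem stmt_5 (x y φ ψ : ℝ)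
    (hφ : φ ∈ Set.Ico 0 (2 * π)) (hψ : ψ ∈ Set.Ico 0 (2 * π))
    (h : Complex.exp (x + φ * Complex.I) + Complex.exp (y + ψ * Complex.I) + 1 = 0) :
    (φ, ψ) ∉ ({(0, 0), (0, π), (π, 0), (π, π)} : Set (ℝ × ℝ)) ↔
      (Real.sin (ψ - φ) ≠ 0 ∧
        Real.exp x = -Real.sin ψ / Real.sin (ψ - φ) ∧
        Real.exp y = Real.sin φ / Real.sin (ψ - φ)) := by
  have h1 := congrArg Complex.re h
  have h2 := congrArg Complex.im h
  simp [Complex.exp_re, Complex.exp_im, Complex.add_re, Complex.add_im] at h1 h2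
  have key1 : Real.exp x * Real.sin (ψ - φ) = -Real.sin ψ := by
    rw [Real.sin_sub]; linear_combination Real.sin ψ * h1 - Real.cos ψ * h2
  have key2 : Real.exp y * Real.sin (ψ - φ) = Real.sin φ := by
    rw [Real.sin_sub]; linear_combination Real.cos φ * h2 - Real.sin φ * h1
  constructor
  · intro hne
    have hsΔ : Real.sin (ψ - φ) ≠ 0 := by
      intro hz
      rw [hz, mul_zero] at key1 key2
      have hφ' := aux_sin_zero φ hφ.1 hφ.2 key2.symm
      have hψ' := aux_sin_zero ψ hψ.1 hψ.2 (by linarith [key1])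
      apply hne
      simp only [Set.mem_insert_iff, Set.mem_singleton_iff, Prod.mk.injEq]
      rcases hφ' with h | h <;> rcases hψ' with h' | h' <;> simp [h, h']
    exact ⟨hsΔ, by field_simp; linarith [key1], by field_simp; linarith [key2]⟩
  · rintro ⟨hsΔ, -, -⟩ hmem
    simp only [Set.mem_insert_iff, Set.mem_singleton_iff, Prod.mk.injEq] at hmem
    apply hsΔ
    rcases hmem with ⟨h1', h2'⟩ | ⟨h1', h2'⟩ | ⟨h1', h2'⟩ | ⟨h1', h2'⟩ <;>
      simp [h1', h2']
end

section
/- The coamoeba of H, i.e. the image of H under (x,y,φ,ψ)↦(φ,ψ), equals T₁ ∪ T₂ ∪ {(0,π),(π,0),(π,π)}, where T₁ = {(φ,ψ): 0<φ<π, π<ψ<φ+π} and T₂ = {(φ,ψ): π<φ<2π, φ−π<ψ<π}. -/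
open Real Complex

/-!
A point of `H` with arguments `(φ, ψ)` is a way of writing `-1 = r e^{iφ} + s e^{iψ}` with
`r, s > 0`. Solving this real 2×2 system by Cramer's rule gives
`r sin (ψ - φ) = -sin ψ` and `s sin (ψ - φ) = sin φ`, so a solution exists exactly when
`sin φ`, `-sin ψ` and `sin (ψ - φ)` have one strict sign, or when both sines vanish; on
`[0, 2π)²` the first case is `T₁` or `T₂` and the second is `(0, π)`, `(π, 0)`, `(π, π)`.
The involution `(φ, ψ) ↦ (ψ, φ)` exchanges `T₁` and `T₂`.
-/

namespace Real

theorem lt_pi_of_sin_pos {t : ℝ} (h2π : t < 2 * π) (hs : 0 < Real.sin t) : t < π := by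
  by_contra! ht
  have : Real.sin (t - 2 * π) ≤ 0 :=
    Real.sin_nonpos_of_nonpos_of_neg_pi_le (by linarith) (by linarith)
  rw [Real.sin_sub_two_pi] at this
  linarith

theorem eq_zero_or_eq_pi_of_sin_eq_zero {t : ℝ} (h0 : 0 ≤ t) (h2π : t < 2 * π)
    (hs : Real.sin t = 0) : t = 0 ∨ t = π := by
  rcases lt_or_ge t π with ht | ht
  · exact .inl ((Real.sin_eq_zero_iff_of_lt_of_lt (by linarith) ht).1 hs)
  · have : Real.sin (t - π) = 0 := by rw [Real.sin_sub_pi, hs, neg_zero]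
    have := (Real.sin_eq_zero_iff_of_lt_of_lt (by linarith) (by linarith)).1 this
    exact .inr (by linarith)

end Real

namespace Coamoeba

variable {φ ψ : ℝ}

/-- The coamoeba of `1 + z₁ + z₂ = 0` in polar coordinates `z₁ = r e^{iφ}`, `z₂ = s e^{iψ}`. -/
def Mem (φ ψ : ℝ) : Prop :=
  ∃ r s : ℝ, 0 < r ∧ 0 < s ∧ r * Real.cos φ + s * Real.cos ψ + 1 = 0 ∧
    r * Real.sin φ + s * Real.sin ψ = 0

theorem mem_iff_exists_exp :
    Mem φ ψ ↔ ∃ x y : ℝ, cexp (x + φ * I) + cexp (y + ψ * I) + 1 = 0 := by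
  simp only [Complex.ext_iff, add_re, add_im, exp_re, exp_im, one_re, one_im, zero_re, zero_im,
    ofReal_re, ofReal_im, mul_re, mul_im, I_re, I_im, mul_zero, mul_one, sub_zero, add_zero,
    zero_add]
  constructor
  · rintro ⟨r, s, hr, hs, hcos, hsin⟩
    exact ⟨Real.log r, Real.log s, by rwa [Real.exp_log hr, Real.exp_log hs],
      by rwa [Real.exp_log hr, Real.exp_log hs]⟩
  · rintro ⟨x, y, hcos, hsin⟩
    exact ⟨Real.exp x, Real.exp y, Real.exp_pos x, Real.exp_pos y, hcos, hsin⟩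

theorem Mem.symm (h : Mem φ ψ) : Mem ψ φ := by
  obtain ⟨r, s, hr, hs, hcos, hsin⟩ := h
  exact ⟨s, r, hs, hr, by linarith, by linarith⟩

theorem mem_of_sin_pos (hφ : 0 < Real.sin φ) (hψ : Real.sin ψ < 0)
    (hψφ : 0 < Real.sin (ψ - φ)) : Mem φ ψ := by
  refine ⟨-Real.sin ψ / Real.sin (ψ - φ), Real.sin φ / Real.sin (ψ - φ),
    div_pos (neg_pos.2 hψ) hψφ, div_pos hφ hψφ, ?_, ?_⟩
  · field_simp
    rw [Real.sin_sub]
    ring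
  · field_simp
    ring

theorem mem_of_mem_T₁ (h0φ : 0 < φ) (hφπ : φ < π) (hπψ : π < ψ) (hψφ : ψ < φ + π) :
    Mem φ ψ := by
  refine mem_of_sin_pos (Real.sin_pos_of_pos_of_lt_pi h0φ hφπ) ?_
    (Real.sin_pos_of_pos_of_lt_pi (by linarith) (by linarith))
  have : 0 < Real.sin (ψ - π) := Real.sin_pos_of_pos_of_lt_pi (by linarith) (by linarith)
  rwa [Real.sin_sub_pi, neg_pos] at this

theorem mem_zero_pi : Mem 0 π :=
  ⟨1, 2, one_pos, two_pos, by norm_num, by norm_num⟩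

theorem mem_pi_pi : Mem π π :=
  ⟨1 / 2, 1 / 2, by norm_num, by norm_num, by norm_num, by norm_num⟩

theorem Mem.mem_T₁_of_sin_pos (h : Mem φ ψ) (hφ : φ ∈ Set.Ico 0 (2 * π))
    (hψ : ψ ∈ Set.Ico 0 (2 * π)) (hsφ : 0 < Real.sin φ) :
    0 < φ ∧ φ < π ∧ π < ψ ∧ ψ < φ + π := by
  obtain ⟨r, s, hr, hs, hcos, hsin⟩ := h
  have hsψ : Real.sin ψ < 0 := by nlinarith
  have hcramer : r * Real.sin (ψ - φ) = -Real.sin ψ := by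
    rw [Real.sin_sub]
    linear_combination Real.sin ψ * hcos - Real.cos ψ * hsin
  have hsψφ : 0 < Real.sin (ψ - φ) := by nlinarith
  have hφπ : φ < π := lt_pi_of_sin_pos hφ.2 hsφ
  have hπψ : π < ψ := by
    by_contra! hψπ
    linarith [Real.sin_nonneg_of_nonneg_of_le_pi hψ.1 hψπ]
  have hφ0 : 0 < φ := hφ.1.lt_of_ne (by rintro rfl; simp at hsφ)
  exact ⟨hφ0, hφπ, hπψ, by linarith [lt_pi_of_sin_pos (by linarith [hψ.2]) hsψφ]⟩

theorem Mem.mem_T₂_of_sin_neg (h : Mem φ ψ) (hφ : φ ∈ Set.Ico 0 (2 * π))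
    (hψ : ψ ∈ Set.Ico 0 (2 * π)) (hsφ : Real.sin φ < 0) :
    π < φ ∧ φ < 2 * π ∧ φ - π < ψ ∧ ψ < π := by
  have hsψ : 0 < Real.sin ψ := by
    obtain ⟨r, s, hr, hs, -, hsin⟩ := h
    nlinarith
  obtain ⟨-, hψπ, hπφ, hφψ⟩ := h.symm.mem_T₁_of_sin_pos hψ hφ hsψ
  exact ⟨hπφ, hφ.2, by linarith, hψπ⟩

theorem Mem.eq_of_sin_eq_zero (h : Mem φ ψ) (hφ : φ ∈ Set.Ico 0 (2 * π))
    (hψ : ψ ∈ Set.Ico 0 (2 * π)) (hsφ : Real.sin φ = 0) :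
    φ = 0 ∧ ψ = π ∨ φ = π ∧ ψ = 0 ∨ φ = π ∧ ψ = π := by
  obtain ⟨r, s, hr, hs, hcos, hsin⟩ := h
  have hsψ : Real.sin ψ = 0 := by
    rw [hsφ, mul_zero, zero_add] at hsin
    exact (mul_eq_zero.1 hsin).resolve_left hs.ne'
  rcases eq_zero_or_eq_pi_of_sin_eq_zero hφ.1 hφ.2 hsφ with rfl | rfl <;>
    rcases eq_zero_or_eq_pi_of_sin_eq_zero hψ.1 hψ.2 hsψ with rfl | rfl
  · rw [Real.cos_zero] at hcos
    linarith
  all_goals simp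

end Coamoeba

theorem stmt_6 :
    {p : ℝ × ℝ | ∃ x y : ℝ, p.1 ∈ Set.Ico 0 (2 * π) ∧ p.2 ∈ Set.Ico 0 (2 * π) ∧
        Complex.exp (x + p.1 * Complex.I) + Complex.exp (y + p.2 * Complex.I) + 1 = 0}
      = {p : ℝ × ℝ | 0 < p.1 ∧ p.1 < π ∧ π < p.2 ∧ p.2 < p.1 + π}
        ∪ {p : ℝ × ℝ | π < p.1 ∧ p.1 < 2 * π ∧ p.1 - π < p.2 ∧ p.2 < π}
        ∪ {((0 : ℝ), π), (π, (0 : ℝ)), (π, π)} := by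
  have hπ := Real.pi_pos
  ext ⟨φ, ψ⟩
  simp only [Set.mem_ofPred_eq, Set.mem_union, Set.mem_insert_iff, Set.mem_singleton_iff,
    Prod.mk.injEq, exists_and_left, ← Coamoeba.mem_iff_exists_exp]
  constructor
  · rintro ⟨hφ, hψ, h⟩
    rcases lt_trichotomy (Real.sin φ) 0 with hs | hs | hs
    · exact .inl (.inr (h.mem_T₂_of_sin_neg hφ hψ hs))
    · exact .inr (h.eq_of_sin_eq_zero hφ hψ hs)
    · exact .inl (.inl (h.mem_T₁_of_sin_pos hφ hψ hs))
  · rintro ((⟨h1, h2, h3, h4⟩ | ⟨h1, h2, h3, h4⟩) | (⟨rfl, rfl⟩ | ⟨rfl, rfl⟩ | ⟨rfl, rfl⟩))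
    · exact ⟨⟨h1.le, by linarith⟩, ⟨by linarith, by linarith⟩,
        Coamoeba.mem_of_mem_T₁ h1 h2 h3 h4⟩
    · exact ⟨⟨by linarith, h2⟩, ⟨by linarith, by linarith⟩,
        (Coamoeba.mem_of_mem_T₁ (by linarith) h4 h1 (by linarith)).symm⟩
    · exact ⟨⟨le_rfl, by linarith⟩, ⟨hπ.le, by linarith⟩, Coamoeba.mem_zero_pi⟩
    · exact ⟨⟨hπ.le, by linarith⟩, ⟨le_rfl, by linarith⟩, Coamoeba.mem_zero_pi.symm⟩
    · exact ⟨⟨hπ.le, by linarith⟩, ⟨hπ.le, by linarith⟩, Coamoeba.mem_pi_pi⟩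
end

section
/- The map Arg restricted to H∘ (points of H over the interior of the amoeba) is a homeomorphism onto T₁ ∪ T₂, with inverse (φ,ψ) ↦ (ln(−sin ψ/sin(ψ−φ)), ln(sin φ/sin(ψ−φ)), φ, ψ). -/
/-!
Write `a = eˣ`, `b = eʸ`. The equation `a e^{iφ} + b e^{iψ} + 1 = 0` says that `1`, `a e^{iφ}`,
`b e^{iψ}` close up to a triangle. Its real and imaginary parts are a linear system in `(a, b)`
with determinant `sin (ψ - φ)`, solved by Cramer's rule (the law of sines):
`a = -sin ψ / sin (ψ - φ)`, `b = sin φ / sin (ψ - φ)`. By the law of cosines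
`a² + b² + 2ab cos (ψ - φ) = 1`, the amoeba-interior inequalities `|a - b| < 1 < a + b` say exactly
that the triangle is non-degenerate, `sin (ψ - φ) ≠ 0`. Hence `H∘` is the graph of the
law-of-sines map over the angles where both quotients are positive, and the signs of `sin φ`,
`sin ψ`, `sin (ψ - φ)` on `[0, 2π)²` cut out precisely `T₁ ∪ T₂`.
-/

open Real Complex

/-- The interior part of the complex line `H∘ ⊂ ℝ² × (S¹)²`, with angles in `[0, 2π)`:
points of `H` projecting to the interior of the amoeba. -/
def Hcirc : Set (ℝ × ℝ × ℝ × ℝ) :=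
  {p | p.2.2.1 ∈ Set.Ico 0 (2 * π) ∧ p.2.2.2 ∈ Set.Ico 0 (2 * π) ∧
    Complex.exp (p.1 + p.2.2.1 * Complex.I) +
      Complex.exp (p.2.1 + p.2.2.2 * Complex.I) + 1 = 0 ∧
    Real.exp p.1 - Real.exp p.2.1 < 1 ∧ Real.exp p.2.1 - Real.exp p.1 < 1 ∧
    1 < Real.exp p.1 + Real.exp p.2.1}

/-- `T₁ ∪ T₂ ⊂ (S¹)²`. -/
def T12 : Set (ℝ × ℝ) :=
  {p | 0 < p.1 ∧ p.1 < π ∧ π < p.2 ∧ p.2 < p.1 + π} ∪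
    {p | π < p.1 ∧ p.1 < 2 * π ∧ p.1 - π < p.2 ∧ p.2 < π}

open Set

namespace Real

theorem sin_pos_iff_of_mem_Ico {x : ℝ} (hx : x ∈ Ico 0 (2 * π)) :
    0 < sin x ↔ 0 < x ∧ x < π := by
  refine ⟨fun h => ⟨hx.1.lt_of_ne ?_, lt_of_not_ge fun hπ => ?_⟩,
    fun h => sin_pos_of_pos_of_lt_pi h.1 h.2⟩
  · rintro rfl
    simp at h
  · have := sin_nonpos_of_nonpos_of_neg_pi_le (x := x - 2 * π) (by linarith [hx.2]) (by linarith)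
    rw [sin_sub_two_pi] at this
    linarith

theorem sin_neg_iff_of_mem_Ico {x : ℝ} (hx : x ∈ Ico 0 (2 * π)) : sin x < 0 ↔ π < x := by
  refine ⟨fun h => lt_of_not_ge fun hπ => ?_, fun h => ?_⟩
  · linarith [sin_nonneg_of_nonneg_of_le_pi hx.1 hπ]
  · simpa using sin_neg_of_neg_of_neg_pi_lt (x := x - 2 * π) (by linarith [hx.2]) (by linarith)

end Real

theorem mem_T12_iff {φ ψ : ℝ} :
    (φ, ψ) ∈ T12 ↔ φ ∈ Ico 0 (2 * π) ∧ ψ ∈ Ico 0 (2 * π) ∧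
      0 < -Real.sin ψ / Real.sin (ψ - φ) ∧ 0 < Real.sin φ / Real.sin (ψ - φ) := by
  have hπ := pi_pos
  simp only [T12, mem_union, mem_ofPred_eq]
  constructor
  · rintro (⟨h₁, h₂, h₃, h₄⟩ | ⟨h₁, h₂, h₃, h₄⟩)
    · have hφ : φ ∈ Ico 0 (2 * π) := ⟨by linarith, by linarith⟩
      have hψ : ψ ∈ Ico 0 (2 * π) := ⟨by linarith, by linarith⟩
      have hD : 0 < Real.sin (ψ - φ) := sin_pos_of_pos_of_lt_pi (by linarith) (by linarith)
      refine ⟨hφ, hψ, div_pos ?_ hD, div_pos ?_ hD⟩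
      · linarith [(sin_neg_iff_of_mem_Ico hψ).2 h₃]
      · exact (sin_pos_iff_of_mem_Ico hφ).2 ⟨h₁, h₂⟩
    · have hφ : φ ∈ Ico 0 (2 * π) := ⟨by linarith, by linarith⟩
      have hψ : ψ ∈ Ico 0 (2 * π) := ⟨by linarith, by linarith⟩
      have hD : Real.sin (ψ - φ) < 0 := sin_neg_of_neg_of_neg_pi_lt (by linarith) (by linarith)
      refine ⟨hφ, hψ, div_pos_of_neg_of_neg ?_ hD, div_pos_of_neg_of_neg ?_ hD⟩
      · linarith [(sin_pos_iff_of_mem_Ico hψ).2 ⟨by linarith, h₄⟩]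
      · exact (sin_neg_iff_of_mem_Ico hφ).2 h₁
  · rintro ⟨hφ, hψ, ha, hb⟩
    rcases div_pos_iff.1 hb with ⟨hsφ, hD⟩ | ⟨hsφ, hD⟩
    · obtain ⟨h₁, h₂⟩ := (sin_pos_iff_of_mem_Ico hφ).1 hsφ
      have h₃ := (sin_neg_iff_of_mem_Ico hψ).1 (by linarith [(div_pos_iff_of_pos_right hD).1 ha])
      refine Or.inl ⟨h₁, h₂, h₃, lt_of_not_ge fun h => ?_⟩
      linarith [(sin_pos_iff_of_mem_Ico (x := ψ - φ) ⟨by linarith, by linarith [hψ.2]⟩).1 hD]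
    · have h₁ := (sin_neg_iff_of_mem_Ico hφ).1 hsφ
      obtain ⟨-, h₄⟩ := (sin_pos_iff_of_mem_Ico hψ).1
        (by linarith [((div_pos_iff.1 ha).resolve_left fun h => by linarith [h.2]).1])
      refine Or.inr ⟨h₁, hφ.2, lt_of_not_ge fun h => ?_, h₄⟩
      have := (sin_pos_iff_of_mem_Ico (x := φ - ψ) ⟨by linarith, by linarith [hφ.2, hψ.1]⟩).1
        (by rw [← neg_sub, Real.sin_neg]; linarith)
      linarith

theorem abs_sub_lt_one_and_one_lt_add_iff {a b θ : ℝ} (ha : 0 < a) (hb : 0 < b)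
    (h : a ^ 2 + b ^ 2 + 2 * a * b * Real.cos θ = 1) :
    (|a - b| < 1 ∧ 1 < a + b) ↔ Real.sin θ ≠ 0 := by
  have hab : 0 < a * b := mul_pos ha hb
  have h₁ : |a - b| < 1 ↔ -1 < Real.cos θ := by
    rw [← sq_lt_one_iff_abs_lt_one]
    constructor <;> intro <;> nlinarith
  have h₂ : 1 < a + b ↔ Real.cos θ < 1 := by
    rw [← one_lt_sq_iff₀ (by positivity)]
    constructor <;> intro <;> nlinarith
  rw [h₁, h₂, ← abs_lt, ← sq_lt_one_iff_abs_lt_one, Real.cos_sq', ← sq_pos_iff]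
  constructor <;> intro <;> linarith

theorem sq_add_sq_add_two_mul_cos_sub_eq_one {a b φ ψ : ℝ}
    (hre : a * Real.cos φ + b * Real.cos ψ + 1 = 0) (him : a * Real.sin φ + b * Real.sin ψ = 0) :
    a ^ 2 + b ^ 2 + 2 * a * b * Real.cos (ψ - φ) = 1 := by
  rw [Real.cos_sub]
  linear_combination (a * Real.cos φ + b * Real.cos ψ - 1) * hre
    + (a * Real.sin φ + b * Real.sin ψ) * him
    - a ^ 2 * Real.sin_sq_add_cos_sq φ - b ^ 2 * Real.sin_sq_add_cos_sq ψ

theorem eq_div_sin_sub_iff {a b φ ψ : ℝ} (hD : Real.sin (ψ - φ) ≠ 0) :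
    (a * Real.cos φ + b * Real.cos ψ + 1 = 0 ∧ a * Real.sin φ + b * Real.sin ψ = 0) ↔
      a = -Real.sin ψ / Real.sin (ψ - φ) ∧ b = Real.sin φ / Real.sin (ψ - φ) := by
  rw [eq_div_iff hD, eq_div_iff hD]
  have hsub := Real.sin_sub ψ φ
  constructor
  · rintro ⟨hre, him⟩
    exact ⟨by linear_combination Real.sin ψ * hre - Real.cos ψ * him + a * hsub,
      by linear_combination -Real.sin φ * hre + Real.cos φ * him + b * hsub⟩
  · rintro ⟨ha, hb⟩
    refine ⟨mul_left_cancel₀ hD ?_, mul_left_cancel₀ hD ?_⟩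
    · linear_combination Real.cos φ * ha + Real.cos ψ * hb + hsub
    · linear_combination Real.sin φ * ha + Real.sin ψ * hb

theorem nondegenerate_triangle_iff {a b φ ψ : ℝ} (ha : 0 < a) (hb : 0 < b) :
    ((a * Real.cos φ + b * Real.cos ψ + 1 = 0 ∧ a * Real.sin φ + b * Real.sin ψ = 0) ∧
      |a - b| < 1 ∧ 1 < a + b) ↔
      a = -Real.sin ψ / Real.sin (ψ - φ) ∧ b = Real.sin φ / Real.sin (ψ - φ) := by
  constructor
  · rintro ⟨⟨hre, him⟩, hineq⟩
    have hcos := sq_add_sq_add_two_mul_cos_sub_eq_one hre him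
    have hD := (abs_sub_lt_one_and_one_lt_add_iff ha hb hcos).1 hineq
    exact (eq_div_sin_sub_iff hD).1 ⟨hre, him⟩
  · rintro ⟨rfl, hb'⟩
    have hD : Real.sin (ψ - φ) ≠ 0 := fun h => by simp [h] at ha
    obtain ⟨hre, him⟩ := (eq_div_sin_sub_iff hD).2 ⟨rfl, hb'⟩
    have hcos := sq_add_sq_add_two_mul_cos_sub_eq_one hre him
    exact ⟨⟨hre, him⟩, (abs_sub_lt_one_and_one_lt_add_iff ha hb hcos).2 hD⟩

theorem exp_add_exp_add_one_eq_zero_iff {x y φ ψ : ℝ} :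
    Complex.exp (x + φ * Complex.I) + Complex.exp (y + ψ * Complex.I) + 1 = 0 ↔
      Real.exp x * Real.cos φ + Real.exp y * Real.cos ψ + 1 = 0 ∧
        Real.exp x * Real.sin φ + Real.exp y * Real.sin ψ = 0 := by
  simp [Complex.ext_iff, Complex.exp_re, Complex.exp_im]

noncomputable def argInverse (q : ℝ × ℝ) : ℝ × ℝ × ℝ × ℝ :=
  (Real.log (-Real.sin q.2 / Real.sin (q.2 - q.1)),
    Real.log (Real.sin q.1 / Real.sin (q.2 - q.1)), q.1, q.2)

theorem mem_Hcirc_iff {p : ℝ × ℝ × ℝ × ℝ} :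
    p ∈ Hcirc ↔ (p.2.2.1, p.2.2.2) ∈ T12 ∧ argInverse (p.2.2.1, p.2.2.2) = p := by
  obtain ⟨x, y, φ, ψ⟩ := p
  have hexp {t c : ℝ} : Real.exp t = c ↔ 0 < c ∧ Real.log c = t := by
    constructor
    · rintro rfl
      exact ⟨Real.exp_pos t, Real.log_exp t⟩
    · rintro ⟨hc, rfl⟩
      exact Real.exp_log hc
  have key := nondegenerate_triangle_iff (Real.exp_pos x) (Real.exp_pos y) (φ := φ) (ψ := ψ)
  rw [abs_sub_lt_iff, hexp, hexp] at key
  simp only [Hcirc, mem_ofPred_eq, exp_add_exp_add_one_eq_zero_iff, mem_T12_iff, argInverse,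
    Prod.mk.injEq, and_true]
  tauto

theorem continuousOn_argInverse : ContinuousOn argInverse T12 := by
  intro q hq
  obtain ⟨-, -, hA, hB⟩ := mem_T12_iff.1 hq
  have hD : Real.sin (q.2 - q.1) ≠ 0 := fun h => by simp [h] at hA
  apply ContinuousAt.continuousWithinAt
  unfold argInverse
  fun_prop (disch := first | exact hD | exact hA.ne' | exact hB.ne')

theorem stmt_7 :
    ∃ h : Hcirc ≃ₜ T12,
      (∀ p : Hcirc, (h p : ℝ × ℝ) = (p.1.2.2.1, p.1.2.2.2)) ∧
      (∀ q : T12, (h.symm q : ℝ × ℝ × ℝ × ℝ) =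
        (Real.log (-Real.sin (q : ℝ × ℝ).2 / Real.sin ((q : ℝ × ℝ).2 - (q : ℝ × ℝ).1)),
         Real.log (Real.sin (q : ℝ × ℝ).1 / Real.sin ((q : ℝ × ℝ).2 - (q : ℝ × ℝ).1)),
         (q : ℝ × ℝ).1, (q : ℝ × ℝ).2)) :=
  ⟨{ toFun := fun p => ⟨(p.1.2.2.1, p.1.2.2.2), (mem_Hcirc_iff.1 p.2).1⟩
     invFun := fun q => ⟨argInverse q, mem_Hcirc_iff.2 ⟨q.2, rfl⟩⟩
     left_inv := fun p => Subtype.ext (mem_Hcirc_iff.1 p.2).2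
     right_inv := fun _ => rfl
     continuous_toFun := by fun_prop
     continuous_invFun := continuousOn_argInverse.domRestrict.subtype_mk _ },
    fun _ => rfl, fun _ => rfl⟩
end

section
/- Let c ≥ ln 2. The line y = 2x + c in ℝ² has no intersection with the curve e^x − e^y = 1; it meets the curve e^y − e^x = 1 in exactly one point, with x-coordinate ln((1+√(1+4e^c))/(2e^c)); and it meets the curve e^x + e^y = 1 in exactly one point, with x-coordinate ln((−1+√(1+4e^c))/(2e^c)). -/
open Real

theorem stmt_13 (c : ℝ) (hc : Real.log 2 ≤ c) :
    (∀ x : ℝ, Real.exp x - Real.exp (2 * x + c) ≠ 1) ∧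
    (∀ x : ℝ, Real.exp (2 * x + c) - Real.exp x = 1 ↔
      x = Real.log ((1 + Real.sqrt (1 + 4 * Real.exp c)) / (2 * Real.exp c))) ∧
    (∀ x : ℝ, Real.exp x + Real.exp (2 * x + c) = 1 ↔
      x = Real.log ((-1 + Real.sqrt (1 + 4 * Real.exp c)) / (2 * Real.exp c))) := by
  have ha : (2:ℝ) ≤ Real.exp c := by
    rw [← Real.exp_log (by norm_num : (0:ℝ) < 2)]
    exact Real.exp_le_exp.mpr hc
  set a := Real.exp c with hadef
  have ha0 : 0 < a := lt_of_lt_of_le two_pos ha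
  have hs2 : Real.sqrt (1 + 4*a) ^ 2 = 1 + 4*a := Real.sq_sqrt (by positivity)
  set s := Real.sqrt (1 + 4*a) with hsdef
  have hs0 : 0 ≤ s := Real.sqrt_nonneg _
  have hs1 : 1 < s := by nlinarith
  have hexp : ∀ x : ℝ, Real.exp (2*x+c) = a * Real.exp x ^ 2 := by
    intro x
    rw [two_mul, Real.exp_add, Real.exp_add]
    ring
  refine ⟨?_, ?_, ?_⟩
  · intro x h
    have ht : 0 < Real.exp x := Real.exp_pos x
    rw [hexp x] at h
    nlinarith [sq_nonneg (2*a*Real.exp x - 1)]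
  · intro x
    have ht : 0 < Real.exp x := Real.exp_pos x
    have hr : (0:ℝ) < (1+s)/(2*a) := by positivity
    rw [hexp x]
    constructor
    · intro h
      have hfac : (Real.exp x - (1+s)/(2*a)) * (2*a*Real.exp x - (1-s)) = 0 := by
        field_simp
        nlinarith
      have h2 : 2*a*Real.exp x - (1-s) > 0 := by nlinarith
      have h1 : Real.exp x = (1+s)/(2*a) := by
        rcases mul_eq_zero.mp hfac with h' | h'
        · linarith
        · linarith
      rw [← h1, Real.log_exp]
    · intro h
      subst h
      rw [Real.exp_log hr]
      field_simp
      nlinarith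
  · intro x
    have ht : 0 < Real.exp x := Real.exp_pos x
    have hr : (0:ℝ) < (-1+s)/(2*a) := by
      apply div_pos (by linarith) (by linarith)
    rw [hexp x]
    constructor
    · intro h
      have hfac : (Real.exp x - (-1+s)/(2*a)) * (2*a*Real.exp x + (1+s)) = 0 := by
        field_simp
        nlinarith
      have h2 : 2*a*Real.exp x + (1+s) > 0 := by nlinarith
      have h1 : Real.exp x = (-1+s)/(2*a) := by
        rcases mul_eq_zero.mp hfac with h' | h'
        · linarith
        · linarith
      rw [← h1, Real.log_exp]
    · intro h
      subst h
      rw [Real.exp_log hr]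
      field_simp
      nlinarith
end
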